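/- Let n ≥ 3. Consider linear maps x_i : ℂ^i → ℂ^{i+1} and y_i : ℂ^{i+1} → ℂ^i for 1 ≤ i ≤ n−2, φ : ℂ^{n−1} → ℂⁿ and ψ : ℂⁿ → ℂ^{n−1}, together with scalars ν_1,…,ν_{n−1} ∈ ℂ satisfying the central moment-map relations: y_1∘x_1 = ν_1·id_ℂ; y_i∘x_i = x_{i−1}∘y_{i−1} + ν_i·id_{ℂ^i} for 2 ≤ i ≤ n−2; and ψ∘φ = x_{n−2}∘y_{n−2} + ν_{n−1}·id_{ℂ^{n−1}}. For 1 ≤ k ≤ n−2 set F_k := range(φ ∘ x_{n−2} ∘ ⋯ ∘ x_k) ⊆ ℂⁿ, set F_{n−1} := range(φ), and set F_0 := 0. Then for every 1 ≤ k ≤ n−1 and every v ∈ F_k, one has (φ∘ψ)(v) − (ν_k + ν_{k+1} + ⋯ + ν_{n−1})·v ∈ F_{k−1}. In particular φ∘ψ maps each F_k into itself and acts on F_k/F_{k−1} by the scalar ν_{n−1} + ⋯ + ν_k. -/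
import Mathlib


/-- The composite `x_{k+d−1} ∘ ⋯ ∘ x_{k+1} ∘ x_k : ℂ^k → ℂ^{k+d}` of the upward stem
maps (equal to `id` when `d = 0`). -/
noncomputable def xChain (x : ∀ i : ℕ, (Fin i → ℂ) →ₗ[ℂ] (Fin (i+1) → ℂ)) (k : ℕ) :
    ∀ d : ℕ, (Fin k → ℂ) →ₗ[ℂ] (Fin (k + d) → ℂ)
  | 0 => LinearMap.id
  | d + 1 => (x (k + d)).comp (xChain x k d)

/-- The flag subspace `F_k := range (φ ∘ x_{n−2} ∘ ⋯ ∘ x_k) ⊆ ℂⁿ` (for `n = m+3`, so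
`n − 2 = m + 1` and `n − 1 = m + 2`), with `F_{m+2} = range φ` and `F_0 = 0` (the chain
then starts from the zero space `ℂ^0`).  The `funLeft` factor is reindexing along the
equality `m + 2 = k + (m + 2 − k)`. -/
noncomputable def flagF (m : ℕ) (x : ∀ i : ℕ, (Fin i → ℂ) →ₗ[ℂ] (Fin (i+1) → ℂ))
    (φ : (Fin (m+2) → ℂ) →ₗ[ℂ] (Fin (m+3) → ℂ)) (k : ℕ) : Submodule ℂ (Fin (m+3) → ℂ) :=
  if h : k ≤ m + 2 then
    LinearMap.range
      ((φ.comp (LinearMap.funLeft ℂ ℂ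
          (Fin.cast (show m + 2 = k + (m + 2 - k) by omega)))).comp
        (xChain x k (m + 2 - k)))
  else ⊥

noncomputable def cL (a b : ℕ) (h : b = a) : (Fin a → ℂ) →ₗ[ℂ] (Fin b → ℂ) :=
  LinearMap.funLeft ℂ ℂ (Fin.cast h)

lemma cL_refl (a : ℕ) (h : a = a) : cL a a h = LinearMap.id := rfl

lemma cL_comp (a b c : ℕ) (h1 : b = a) (h2 : c = b) (h3 : c = a) :
    (cL b c h2).comp (cL a b h1) = cL a c h3 := rfl

lemma x_cL (x : ∀ i : ℕ, (Fin i → ℂ) →ₗ[ℂ] (Fin (i+1) → ℂ)) (a b : ℕ) (h : b = a)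
    (h' : b + 1 = a + 1) : (cL (a+1) (b+1) h').comp (x a) = (x b).comp (cL a b h) := by
  subst h; rfl

lemma y_cL (y : ∀ i : ℕ, (Fin (i+1) → ℂ) →ₗ[ℂ] (Fin i → ℂ)) (a b : ℕ) (h : b = a)
    (h' : b + 1 = a + 1) : (y b).comp (cL (a+1) (b+1) h') = (cL a b h).comp (y a) := by
  subst h; rfl

lemma xChain_left (x : ∀ i : ℕ, (Fin i → ℂ) →ₗ[ℂ] (Fin (i+1) → ℂ)) (k : ℕ) :
    ∀ d : ℕ, ∀ h : k + (d+1) = (k+1) + d,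
      xChain x k (d+1) = (cL ((k+1)+d) (k+(d+1)) h).comp ((xChain x (k+1) d).comp (x k))
  | 0, h => rfl
  | d+1, h => by
    have h2 : k + (d+1) = (k+1) + d := by omega
    calc xChain x k (d+2)
        = (x (k+(d+1))).comp (xChain x k (d+1)) := rfl
      _ = (x (k+(d+1))).comp ((cL ((k+1)+d) (k+(d+1)) h2).comp
            ((xChain x (k+1) d).comp (x k))) := by rw [xChain_left x k d h2]
      _ = ((x (k+(d+1))).comp (cL ((k+1)+d) (k+(d+1)) h2)).comp
            ((xChain x (k+1) d).comp (x k)) := rfl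
      _ = ((cL (((k+1)+d)+1) ((k+(d+1))+1) h).comp (x ((k+1)+d))).comp
            ((xChain x (k+1) d).comp (x k)) := by
            rw [x_cL x ((k+1)+d) (k+(d+1)) h2 h]
      _ = (cL ((k+1)+(d+1)) (k+(d+2)) h).comp ((xChain x (k+1) (d+1)).comp (x k)) := rfl

section
variable (m : ℕ)
    (x : ∀ i : ℕ, (Fin i → ℂ) →ₗ[ℂ] (Fin (i+1) → ℂ))
    (y : ∀ i : ℕ, (Fin (i+1) → ℂ) →ₗ[ℂ] (Fin i → ℂ))
    (ν : ℕ → ℂ)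

lemma key (hrel1 : (y 1).comp (x 1) = ν 1 • LinearMap.id)
    (hrel2 : ∀ i, 1 ≤ i → i ≤ m →
      (y (i+1)).comp (x (i+1)) = (x i).comp (y i) + ν (i+1) • LinearMap.id) :
    ∀ d k' : ℕ, (k'+1) + d ≤ m + 1 →
      (y ((k'+1)+d)).comp (xChain x (k'+1) (d+1))
        = (xChain x (k'+1) d).comp ((x k').comp (y k'))
          + (∑ j ∈ Finset.Icc (k'+1) ((k'+1)+d), ν j) • xChain x (k'+1) d := by
  intro d
  induction d with
  | zero =>
    intro k' hk
    show (y (k'+1)).comp ((x (k'+1)).comp (xChain x (k'+1) 0))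
        = (xChain x (k'+1) 0).comp ((x k').comp (y k'))
          + (∑ j ∈ Finset.Icc (k'+1) (k'+1), ν j) • xChain x (k'+1) 0
    show (y (k'+1)).comp ((x (k'+1)).comp LinearMap.id)
        = LinearMap.id.comp ((x k').comp (y k'))
          + (∑ j ∈ Finset.Icc (k'+1) (k'+1), ν j) • LinearMap.id
    rw [LinearMap.comp_id, LinearMap.id_comp, Finset.Icc_self, Finset.sum_singleton]
    match k' with
    | 0 =>
      have hx0 : (x 0).comp (y 0) = 0 := LinearMap.ext fun v => by
        rw [LinearMap.comp_apply, Subsingleton.elim ((y 0) v) 0, map_zero]; rfl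
      rw [hrel1, hx0]
      simp
    | i+1 => exact hrel2 (i+1) (by omega) (by omega)
  | succ d ih =>
    intro k' hk
    have hre := hrel2 ((k'+1)+d) (by omega) (by omega)
    have ihd := ih k' (by omega)
    have hch : (x (k'+1+d)).comp (xChain x (k'+1) d) = xChain x (k'+1) (d+1) := rfl
    show (y (k'+1+d+1)).comp ((x (k'+1+d+1)).comp (xChain x (k'+1) (d+1)))
        = (xChain x (k'+1) (d+1)).comp ((x k').comp (y k'))
          + (∑ j ∈ Finset.Icc (k'+1) (k'+1+d+1), ν j) • xChain x (k'+1) (d+1)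
    rw [← LinearMap.comp_assoc, hre, LinearMap.add_comp, LinearMap.smul_comp,
      LinearMap.id_comp, LinearMap.comp_assoc, ihd, LinearMap.comp_add, LinearMap.comp_smul,
      ← LinearMap.comp_assoc, ← LinearMap.comp_assoc, hch,
      Finset.sum_Icc_succ_top (show k'+1 ≤ k'+1+d+1 by omega), add_smul, LinearMap.comp_assoc]
    abel

end

lemma flagF_eq (m : ℕ) (x : ∀ i : ℕ, (Fin i → ℂ) →ₗ[ℂ] (Fin (i+1) → ℂ))
    (φ : (Fin (m+2) → ℂ) →ₗ[ℂ] (Fin (m+3) → ℂ)) (k d : ℕ) (hk : k ≤ m + 2)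
    (h : m + 2 = k + d) :
    flagF m x φ k = LinearMap.range ((φ.comp (cL (k+d) (m+2) h)).comp (xChain x k d)) := by
  have hd : m + 2 - k = d := by omega
  subst hd
  simp only [flagF, dif_pos hk]
  rfl

section
variable (m : ℕ)
    (x : ∀ i : ℕ, (Fin i → ℂ) →ₗ[ℂ] (Fin (i+1) → ℂ))
    (y : ∀ i : ℕ, (Fin (i+1) → ℂ) →ₗ[ℂ] (Fin i → ℂ))
    (φ : (Fin (m+2) → ℂ) →ₗ[ℂ] (Fin (m+3) → ℂ))
    (ψ : (Fin (m+3) → ℂ) →ₗ[ℂ] (Fin (m+2) → ℂ))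
    (ν : ℕ → ℂ)

lemma key2 (hrel1 : (y 1).comp (x 1) = ν 1 • LinearMap.id)
    (hrel2 : ∀ i, 1 ≤ i → i ≤ m →
      (y (i+1)).comp (x (i+1)) = (x i).comp (y i) + ν (i+1) • LinearMap.id)
    (hrel3 : ψ.comp φ = (x (m+1)).comp (y (m+1)) + ν (m+2) • LinearMap.id)
    (k' d : ℕ) (h : m + 2 = (k'+1) + d) :
    (ψ.comp φ).comp ((cL ((k'+1)+d) (m+2) h).comp (xChain x (k'+1) d))
      = ((cL ((k'+1)+d) (m+2) h).comp (xChain x (k'+1) d)).comp ((x k').comp (y k'))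
        + (∑ j ∈ Finset.Icc (k'+1) (m+2), ν j) •
            ((cL ((k'+1)+d) (m+2) h).comp (xChain x (k'+1) d)) := by
  cases d with
  | zero =>
    have hk : k' = m + 1 := by omega
    subst hk
    show (ψ.comp φ).comp ((cL (m+2) (m+2) h).comp (xChain x (m+2) 0))
      = ((cL (m+2) (m+2) h).comp (xChain x (m+2) 0)).comp ((x (m+1)).comp (y (m+1)))
        + (∑ j ∈ Finset.Icc (m+2) (m+2), ν j) •
            ((cL (m+2) (m+2) h).comp (xChain x (m+2) 0))
    rw [cL_refl]
    show (ψ.comp φ).comp (LinearMap.id.comp LinearMap.id)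
      = (LinearMap.id.comp LinearMap.id).comp ((x (m+1)).comp (y (m+1)))
        + (∑ j ∈ Finset.Icc (m+2) (m+2), ν j) • (LinearMap.id.comp LinearMap.id)
    rw [LinearMap.id_comp, LinearMap.comp_id, LinearMap.id_comp, hrel3,
      Finset.Icc_self, Finset.sum_singleton]
  | succ e =>
    have h2 : m + 1 = (k'+1) + e := by omega
    have hkey := key m x y ν hrel1 hrel2 e k' (by omega)
    have hstep : (cL ((k'+1)+(e+1)) (m+2) h).comp (x ((k'+1)+e))
        = (x (m+1)).comp (cL ((k'+1)+e) (m+1) h2) := by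
      have := x_cL x ((k'+1)+e) (m+1) h2 h
      exact this
    have hystep : (y (m+1)).comp (cL ((k'+1)+(e+1)) (m+2) h)
        = (cL ((k'+1)+e) (m+1) h2).comp (y ((k'+1)+e)) := by
      have := y_cL y ((k'+1)+e) (m+1) h2 h
      exact this
    have hC : (cL ((k'+1)+(e+1)) (m+2) h).comp (xChain x (k'+1) (e+1))
        = ((x (m+1)).comp (cL ((k'+1)+e) (m+1) h2)).comp (xChain x (k'+1) e) := by
      calc (cL ((k'+1)+(e+1)) (m+2) h).comp (xChain x (k'+1) (e+1))
          = ((cL ((k'+1)+(e+1)) (m+2) h).comp (x ((k'+1)+e))).comp (xChain x (k'+1) e) := rfl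
        _ = ((x (m+1)).comp (cL ((k'+1)+e) (m+1) h2)).comp (xChain x (k'+1) e) := by
            rw [hstep]
    rw [hrel3, LinearMap.add_comp, LinearMap.smul_comp, LinearMap.id_comp,
      LinearMap.comp_assoc (((cL ((k'+1)+(e+1)) (m+2) h).comp (xChain x (k'+1) (e+1))))
        (y (m+1)) (x (m+1))]
    -- now have x(m+1) ∘ (y(m+1) ∘ C)
    have hyC : (y (m+1)).comp ((cL ((k'+1)+(e+1)) (m+2) h).comp (xChain x (k'+1) (e+1)))
        = (cL ((k'+1)+e) (m+1) h2).comp ((y ((k'+1)+e)).comp (xChain x (k'+1) (e+1))) := by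
      rw [← LinearMap.comp_assoc, hystep, LinearMap.comp_assoc]
    rw [hyC, hkey, LinearMap.comp_add, LinearMap.comp_smul, LinearMap.comp_add,
      LinearMap.comp_smul]
    -- reassemble x(m+1) ∘ cL h2 ∘ (chain_e ∘ xy) and ∘ chain_e
    have hXA : (x (m+1)).comp ((cL ((k'+1)+e) (m+1) h2).comp (xChain x (k'+1) e))
        = (cL ((k'+1)+(e+1)) (m+2) h).comp (xChain x (k'+1) (e+1)) := by
      rw [← LinearMap.comp_assoc, ← hstep]
      rfl
    have hsum : (∑ j ∈ Finset.Icc (k'+1) (m+2), ν j)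
        = (∑ j ∈ Finset.Icc (k'+1) ((k'+1)+e), ν j) + ν (m+2) := by
      have hI : Finset.Icc (k'+1) (m+1) = Finset.Icc (k'+1) ((k'+1)+e) := by rw [h2]
      calc ∑ j ∈ Finset.Icc (k'+1) (m+2), ν j
          = ∑ j ∈ Finset.Icc (k'+1) (m+1+1), ν j := rfl
        _ = (∑ j ∈ Finset.Icc (k'+1) (m+1), ν j) + ν (m+1+1) :=
            Finset.sum_Icc_succ_top (by omega) ν
        _ = (∑ j ∈ Finset.Icc (k'+1) ((k'+1)+e), ν j) + ν (m+2) := by rw [hI]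
    rw [← LinearMap.comp_assoc ((x k').comp (y k')) (xChain x (k'+1) e)
        (cL ((k'+1)+e) (m+1) h2),
      ← LinearMap.comp_assoc ((x k').comp (y k'))
        ((cL ((k'+1)+e) (m+1) h2).comp (xChain x (k'+1) e)) (x (m+1)),
      hXA, hsum, add_smul]
    abel

end

/-- (Here `n = m + 3 ≥ 3`, `ℂ^i = Fin i → ℂ`, stem maps
`x_i, y_i` for `1 ≤ i ≤ n−2 = m+1`, `φ : ℂ^{n−1} → ℂⁿ`, `ψ : ℂⁿ → ℂ^{n−1}`, and
`ν_1,…,ν_{n−1}` scalars satisfying the central moment-map relations.)  For every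
`1 ≤ k ≤ n−1` and every `v ∈ F_k`, one has
`(φ∘ψ)(v) − (ν_k + ⋯ + ν_{n−1})·v ∈ F_{k−1}`; in particular `φ∘ψ` maps `F_k` into
itself. -/
theorem stmt6 (m : ℕ)
    (x : ∀ i : ℕ, (Fin i → ℂ) →ₗ[ℂ] (Fin (i+1) → ℂ))
    (y : ∀ i : ℕ, (Fin (i+1) → ℂ) →ₗ[ℂ] (Fin i → ℂ))
    (φ : (Fin (m+2) → ℂ) →ₗ[ℂ] (Fin (m+3) → ℂ))
    (ψ : (Fin (m+3) → ℂ) →ₗ[ℂ] (Fin (m+2) → ℂ))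
    (ν : ℕ → ℂ)
    (hrel1 : (y 1).comp (x 1) = ν 1 • LinearMap.id)
    (hrel2 : ∀ i, 1 ≤ i → i ≤ m →
      (y (i+1)).comp (x (i+1)) = (x i).comp (y i) + ν (i+1) • LinearMap.id)
    (hrel3 : ψ.comp φ = (x (m+1)).comp (y (m+1)) + ν (m+2) • LinearMap.id) :
    ∀ k, 1 ≤ k → k ≤ m + 2 →
      (∀ v ∈ flagF m x φ k,
        (φ.comp ψ) v - (∑ j ∈ Finset.Icc k (m+2), ν j) • v ∈ flagF m x φ (k-1)) ∧
      Submodule.map (φ.comp ψ) (flagF m x φ k) ≤ flagF m x φ k := by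
  intro k hk1 hk2
  obtain ⟨k', rfl⟩ : ∃ k', k = k' + 1 := ⟨k - 1, by omega⟩
  obtain ⟨d, hd⟩ : ∃ d, m + 2 = (k'+1) + d := ⟨m + 2 - (k'+1), by omega⟩
  have hd' : m + 2 = k' + (d+1) := by omega
  have hFk := flagF_eq m x φ (k'+1) d hk2 hd
  have hFk' := flagF_eq m x φ k' (d+1) (by omega) hd'
  have hmap : (φ.comp (cL (k'+(d+1)) (m+2) hd')).comp (xChain x k' (d+1))
      = ((φ.comp (cL ((k'+1)+d) (m+2) hd)).comp (xChain x (k'+1) d)).comp (x k') := by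
    rw [xChain_left x k' d (by omega)]
    rfl
  have hpart1 : ∀ v ∈ flagF m x φ (k'+1),
      (φ.comp ψ) v - (∑ j ∈ Finset.Icc (k'+1) (m+2), ν j) • v
        ∈ flagF m x φ (k'+1-1) := by
    intro v hv
    rw [hFk] at hv
    obtain ⟨u, rfl⟩ := hv
    show _ ∈ flagF m x φ k'
    rw [hFk']
    refine ⟨(y k') u, ?_⟩
    have e2 := LinearMap.congr_fun (key2 m x y φ ψ ν hrel1 hrel2 hrel3 k' d hd) u
    simp only [LinearMap.comp_apply, LinearMap.add_apply, LinearMap.smul_apply] at e2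
    rw [hmap]
    simp only [LinearMap.comp_apply]
    rw [e2, map_add, map_smul]
    abel
  refine ⟨hpart1, ?_⟩
  intro w hw
  obtain ⟨v, hv, rfl⟩ := hw
  have h1 := hpart1 v hv
  have hsub : flagF m x φ (k'+1-1) ≤ flagF m x φ (k'+1) := by
    show flagF m x φ k' ≤ flagF m x φ (k'+1)
    rw [hFk, hFk', hmap]
    exact LinearMap.range_comp_le_range _ _
  have hrw : (φ.comp ψ) v
      = ((φ.comp ψ) v - (∑ j ∈ Finset.Icc (k'+1) (m+2), ν j) • v)
        + (∑ j ∈ Finset.Icc (k'+1) (m+2), ν j) • v := by abel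
  rw [hrw]
  exact add_mem (hsub h1) (Submodule.smul_mem _ _ hv)
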